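/- Let ε ∈ ℂ be a primitive 5th root of unity and let G_icosa be the binary icosahedral group, i.e., the subgroup of GL(2,ℂ) generated by the matrices S = [[ε³, 0], [0, ε²]], T = (1/(ε² − ε³))·[[ε + ε⁴, 1], [1, −(ε + ε⁴)]], and U = [[0, 1], [−1, 0]]; it is a subgroup of SU(2) and acts on ℙ(ℂ²). Let x₀ ∈ ℙ(ℂ²) be the line spanned by (1,0). Then the stabilizer {g ∈ G_icosa | g•x₀ = x₀} has exactly 10 elements. -/

import Mathlib

/-!
The generators `S`, `T`, `U` lie in `SU(2)` and preserve Klein's icosahedral form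
`F(x, y) = x y (x¹⁰ + 11 x⁵ y⁵ - y¹⁰)`, whose zeros are the twelve vertices of the icosahedron;
for `T` this comes down to `t = ε + ε⁴` satisfying `t² + t = 1`. So every element of `G_icosa`
does. An element fixing the line `ℂ (1, 0)` is upper triangular, hence, lying in `SU(2)`, equal to
`diag(a, a⁻¹)`, and such a matrix preserves `F` exactly when `a¹⁰ = 1`. Conversely
`U² S = diag(-ε³, -ε²)` with `-ε³` a primitive tenth root of unity, so all ten of these diagonal
matrices lie in `G_icosa`.
-/

open Matrix

noncomputable section

/-- `ℂ²` with its standard Hermitian inner product. -/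
abbrev E2 := EuclideanSpace ℂ (Fin 2)

/-- `SU(2)`, as a subgroup of the group of invertible `2 × 2` complex matrices. -/
def SU2 : Subgroup (GL (Fin 2) ℂ) where
  carrier := {g | (g : Matrix (Fin 2) (Fin 2) ℂ) ∈ Matrix.specialUnitaryGroup (Fin 2) ℂ}
  one_mem' := show ((1 : GL (Fin 2) ℂ) : Matrix (Fin 2) (Fin 2) ℂ) ∈
      Matrix.specialUnitaryGroup (Fin 2) ℂ from Submonoid.one_mem _
  mul_mem' := fun {a b} ha hb =>
    show ((a * b : GL (Fin 2) ℂ) : Matrix (Fin 2) (Fin 2) ℂ) ∈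
      Matrix.specialUnitaryGroup (Fin 2) ℂ from Submonoid.mul_mem _ ha hb
  inv_mem' := by
    intro a ha
    have ha' : (a : Matrix (Fin 2) (Fin 2) ℂ) ∈ Matrix.specialUnitaryGroup (Fin 2) ℂ := ha
    have h1 : ((a⁻¹ : GL (Fin 2) ℂ) : Matrix (Fin 2) (Fin 2) ℂ)
        = star (a : Matrix (Fin 2) (Fin 2) ℂ) :=
      Units.inv_eq_of_mul_eq_one_right ha'.1.2
    show ((a⁻¹ : GL (Fin 2) ℂ) : Matrix (Fin 2) (Fin 2) ℂ) ∈
      Matrix.specialUnitaryGroup (Fin 2) ℂ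
    rw [Matrix.mem_specialUnitaryGroup_iff] at ha' ⊢
    constructor
    · rw [h1]; exact Unitary.star_mem ha'.1
    · rw [h1, Matrix.star_eq_conjTranspose, Matrix.det_conjTranspose, ha'.2, star_one]

/-- The linear action of an invertible matrix on `ℂ²`. -/
def mAct (g : GL (Fin 2) ℂ) : E2 →ₗ[ℂ] E2 :=
  Matrix.toEuclideanLin (g : Matrix (Fin 2) (Fin 2) ℂ)

lemma mAct_mul (g h : GL (Fin 2) ℂ) : mAct (g * h) = (mAct g) ∘ₗ (mAct h) := by
  ext v
  simp [mAct, Matrix.toEuclideanLin_apply, Matrix.mulVec_mulVec]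

lemma mAct_one : mAct (1 : GL (Fin 2) ℂ) = LinearMap.id := by
  ext v
  simp [mAct, Matrix.toEuclideanLin_apply]

lemma mAct_inv_apply (g : GL (Fin 2) ℂ) (v : E2) : mAct g (mAct g⁻¹ v) = v := by
  have h : mAct g ∘ₗ mAct g⁻¹ = LinearMap.id := by
    rw [← mAct_mul, mul_inv_cancel, mAct_one]
  exact congrArg (fun f => f v) h

/-- The action of an invertible matrix on `ℂ²`, as a linear equivalence. -/
def mEquiv (g : GL (Fin 2) ℂ) : E2 ≃ₗ[ℂ] E2 :=
  LinearEquiv.ofLinear (mAct g) (mAct g⁻¹)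
    (by rw [← mAct_mul, mul_inv_cancel, mAct_one])
    (by rw [← mAct_mul, inv_mul_cancel, mAct_one])

/-- The projectivization `ℙ(ℂ²)`: points are the `1`-dimensional subspaces of `ℂ²`. -/
def ProjLine := {l : Submodule ℂ E2 // Module.finrank ℂ l = 1}

/-- The action of an invertible matrix on `ℙ(ℂ²)`, `g • l = g(l)`. -/
def lAct (g : GL (Fin 2) ℂ) (l : ProjLine) : ProjLine :=
  ⟨l.1.map ((mEquiv g : E2 ≃ₗ[ℂ] E2) : E2 →ₗ[ℂ] E2), by
    rw [LinearEquiv.finrank_map_eq]; exact l.2⟩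

/-- The space `H` of sections of the tautological bundle: maps `s : ℙ(ℂ²) → ℂ²`
with `s l ∈ l` for every line `l`. -/
def Hsec : Submodule ℂ (ProjLine → E2) where
  carrier := {s | ∀ l : ProjLine, s l ∈ l.1}
  add_mem' := fun ha hb l => Submodule.add_mem _ (ha l) (hb l)
  zero_mem' := fun l => Submodule.zero_mem _
  smul_mem' := fun c s hs l => Submodule.smul_mem _ c (hs l)

/-- Evaluation of a section at a line `l`: `e_l(s) = s(l)`. -/
def ev (l : ProjLine) : Hsec →ₗ[ℂ] E2 where
  toFun s := s.1 l
  map_add' := fun _ _ => rfl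
  map_smul' := fun _ _ => rfl

lemma sAct_mem (g : GL (Fin 2) ℂ) (s : Hsec) (l : ProjLine) :
    mAct g (s.1 (lAct g⁻¹ l)) ∈ l.1 := by
  obtain ⟨w, hw, hval⟩ := s.2 (lAct g⁻¹ l)
  have : s.1 (lAct g⁻¹ l) = mAct g⁻¹ w := hval.symm
  rw [this, mAct_inv_apply]
  exact hw

/-- The action of an invertible matrix on sections: `(g·s)(l) = g(s(g⁻¹•l))`. -/
def sAct (g : GL (Fin 2) ℂ) : Hsec →ₗ[ℂ] Hsec where
  toFun s := ⟨fun l => mAct g (s.1 (lAct g⁻¹ l)), fun l => sAct_mem g s l⟩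
  map_add' := fun a b => Subtype.ext <| funext fun l => (mAct g).map_add _ _
  map_smul' := fun c a => Subtype.ext <| funext fun l => (mAct g).map_smul c _

/-- The translated linear map `g·λ : v ↦ g·(λ(g⁻¹ v))`, for `λ : ℂ² → H`. -/
def lamAct (g : GL (Fin 2) ℂ) (lam : E2 →ₗ[ℂ] Hsec) : E2 →ₗ[ℂ] Hsec :=
  (sAct g) ∘ₗ lam ∘ₗ (mAct g⁻¹)

/-- Orthogonal projection of `ℂ²` onto a line `l`. -/
def prL (l : ProjLine) (v : E2) : E2 := (l.1.orthogonalProjectionOnto v : E2)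

/-- The vector `(1, 0) ∈ ℂ²`. -/
def v₀ : E2 := (WithLp.equiv 2 (Fin 2 → ℂ)).symm ![1, 0]

lemma v₀_ne : v₀ ≠ 0 := by
  intro h0
  have h1 := congrFun (congrArg (WithLp.equiv 2 (Fin 2 → ℂ)) h0) 0
  simp [v₀] at h1

/-- The line spanned by `(1, 0)`, as a point of `ℙ(ℂ²)`. -/
def x₀ : ProjLine := ⟨Submodule.span ℂ {v₀}, finrank_span_singleton v₀_ne⟩

/-- The map `λ₀ : ℂ² → H`, `λ₀(v)(l) = 2 · pr_l(v)`. -/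
def lam₀ : E2 →ₗ[ℂ] Hsec where
  toFun v := ⟨fun l => (2 : ℂ) • prL l v, fun l => l.1.smul_mem _ (Submodule.coe_mem _)⟩
  map_add' v w := Subtype.ext <| funext fun l => by
    show (2 : ℂ) • prL l (v + w) = (2 : ℂ) • prL l v + (2 : ℂ) • prL l w
    rw [prL, prL, prL, map_add, Submodule.coe_add, smul_add]
  map_smul' c v := Subtype.ext <| funext fun l => by
    show (2 : ℂ) • prL l (c • v) = c • ((2 : ℂ) • prL l v)
    rw [prL, prL, _root_.map_smul, Submodule.coe_smul, smul_comm]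


section InvariantSubgroup

variable {n K β : Type*} [Fintype n] [DecidableEq n] [CommRing K]

def invariantSubgroup (f : (n → K) → β) : Subgroup (GL n K) where
  carrier := {g | ∀ v, f ((g : Matrix n n K) *ᵥ v) = f v}
  one_mem' v := by simp
  mul_mem' {a b} ha hb v := by
    rw [Units.val_mul, ← mulVec_mulVec]
    exact (ha _).trans (hb v)
  inv_mem' {a} ha v := by
    have := ha ((a⁻¹ : GL n K) *ᵥ v)
    rwa [mulVec_mulVec, Units.mul_inv, one_mulVec, eq_comm] at this

lemma mem_invariantSubgroup {f : (n → K) → β} {g : GL n K} :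
    g ∈ invariantSubgroup f ↔ ∀ v, f ((g : Matrix n n K) *ᵥ v) = f v :=
  Iff.rfl

end InvariantSubgroup

section DiagGL

variable {R : Type*} [CommRing R]

def diagGL : Rˣ →* GL (Fin 2) R where
  toFun a :=
    ⟨!![(a : R), 0; 0, ↑a⁻¹], !![↑a⁻¹, 0; 0, (a : R)], by simp [one_fin_two], by simp [one_fin_two]⟩
  map_one' := by ext i j; fin_cases i <;> fin_cases j <;> simp
  map_mul' a b := by ext i j; fin_cases i <;> fin_cases j <;> simp [mul_comm]

@[simp]
lemma coe_diagGL (a : Rˣ) : (diagGL a : Matrix (Fin 2) (Fin 2) R) = !![(a : R), 0; 0, ↑a⁻¹] :=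
  rfl

lemma diagGL_injective : Function.Injective (diagGL : Rˣ →* GL (Fin 2) R) := fun a b h =>
  Units.ext (by simpa using congr_fun₂ congr(($h : Matrix (Fin 2) (Fin 2) R)) 0 0)

end DiagGL

lemma mAct_v₀ (g : GL (Fin 2) ℂ) :
    mAct g v₀ =
      WithLp.toLp 2 ![(g : Matrix (Fin 2) (Fin 2) ℂ) 0 0, (g : Matrix (Fin 2) (Fin 2) ℂ) 1 0] := by
  simp [mAct, v₀]

lemma lAct_x₀_eq_iff (g : GL (Fin 2) ℂ) :
    lAct g x₀ = x₀ ↔ (g : Matrix (Fin 2) (Fin 2) ℂ) 1 0 = 0 := by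
  refine Iff.trans (Subtype.ext_iff (p := fun l : Submodule ℂ E2 => Module.finrank ℂ l = 1)) ?_
  change (Submodule.span ℂ {v₀}).map (mAct g) = Submodule.span ℂ {v₀} ↔ _
  rw [Submodule.map_span, Set.image_singleton, Submodule.span_singleton_eq_span_singleton, mAct_v₀]
  constructor
  · rintro ⟨z, hz⟩
    simpa [v₀, Units.smul_def] using congr($hz 1)
  · intro h
    have h00 : (g : Matrix (Fin 2) (Fin 2) ℂ) 0 0 ≠ 0 := by
      intro h0
      simpa [det_fin_two, h0, h] using g.det_ne_zero
    refine ⟨(Units.mk0 _ h00)⁻¹, ?_⟩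
    ext i
    fin_cases i <;> simp [v₀, h, Units.smul_def, h00]

lemma mem_SU2_of_coe_eq {g : GL (Fin 2) ℂ} {a b : ℂ}
    (hg : (g : Matrix (Fin 2) (Fin 2) ℂ) = !![a, b; -star b, star a])
    (hab : a * star a + b * star b = 1) : g ∈ SU2 := by
  change (g : Matrix (Fin 2) (Fin 2) ℂ) ∈ specialUnitaryGroup (Fin 2) ℂ
  rw [mem_specialUnitaryGroup_iff, mem_unitaryGroup_iff, hg, det_fin_two_of]
  refine ⟨?_, by linear_combination hab⟩
  rw [Complex.star_def] at hab
  have hba : b * starRingEnd ℂ b + a * starRingEnd ℂ a = 1 := by rw [add_comm, hab]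
  ext i j
  fin_cases i <;> fin_cases j <;>
    simp [star_eq_conjTranspose, mul_apply, Fin.sum_univ_two, hab, hba, mul_comm]

lemma exists_eq_diagGL_of_mem_SU2 {g : GL (Fin 2) ℂ} (hg : g ∈ SU2)
    (h : (g : Matrix (Fin 2) (Fin 2) ℂ) 1 0 = 0) : ∃ u : ℂˣ, g = diagGL u := by
  obtain ⟨hu, hdet⟩ := mem_specialUnitaryGroup_iff.mp hg
  set A := (g : Matrix (Fin 2) (Fin 2) ℂ) with hA
  have hstar := congr_fun₂ (mem_unitaryGroup_iff'.mp hu)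
  have h00 : star (A 0 0) * A 0 0 = 1 := by simpa [mul_apply, h] using hstar 0 0
  have h01 : star (A 0 0) * A 0 1 = 0 := by simpa [mul_apply, h] using hstar 0 1
  have h01' : A 0 1 = 0 := (mul_eq_zero.mp h01).resolve_left (left_ne_zero_of_mul_eq_one h00)
  have hdet' : A 0 0 * A 1 1 = 1 := by simpa [det_fin_two, h] using hdet
  refine ⟨Units.mkOfMulEqOne _ _ hdet', Units.ext ?_⟩
  ext i j
  fin_cases i <;> fin_cases j <;> simp [← hA, h, h01', eq_inv_of_mul_eq_one_right hdet']

def icosaForm (v : Fin 2 → ℂ) : ℂ := v 0 * v 1 * (v 0 ^ 10 + 11 * v 0 ^ 5 * v 1 ^ 5 - v 1 ^ 10)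

lemma icosaForm_smul (c : ℂ) (v : Fin 2 → ℂ) : icosaForm (c • v) = c ^ 12 * icosaForm v := by
  simp only [icosaForm, Pi.smul_apply, smul_eq_mul]
  ring

lemma icosaForm_golden {t : ℂ} (ht : t ^ 2 + t = 1) (v : Fin 2 → ℂ) :
    icosaForm ![t * v 0 + v 1, v 0 - t * v 1] = (t - 2) ^ 6 * icosaForm v := by
  simp only [icosaForm, Matrix.cons_val_zero, Matrix.cons_val_one]
  grind

lemma diagGL_mem_invariantSubgroup_icosaForm_iff (a : ℂˣ) :
    diagGL a ∈ invariantSubgroup icosaForm ↔ a ^ 10 = 1 := by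
  have key (v : Fin 2 → ℂ) :
      icosaForm ((diagGL a : Matrix (Fin 2) (Fin 2) ℂ) *ᵥ v) - icosaForm v =
        ((a : ℂ) ^ 10 - 1) * v 0 ^ 11 * v 1 - (((a : ℂ) ^ 10)⁻¹ - 1) * v 0 * v 1 ^ 11 := by
    simp only [icosaForm, coe_diagGL, mulVec_fin_two, of_apply, cons_val_zero, cons_val_one,
      cons_val_fin_one, Units.val_inv_eq_inv_val, zero_mul, add_zero, zero_add]
    field_simp
    ring
  simp only [mem_invariantSubgroup, ← sub_eq_zero (a := icosaForm _), key, Units.ext_iff,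
    Units.val_pow_eq_pow_val, Units.val_one]
  constructor
  · intro h
    have h1 := h ![1, 1]
    have h2 := h ![2, 1]
    simp only [cons_val_zero, cons_val_one, cons_val_fin_one, one_pow, mul_one,
      sub_sub_sub_cancel_right] at h1 h2
    linear_combination (h2 - 2 * h1) / 2046
  · intro h v
    simp [h]

lemma IsPrimitiveRoot.neg_of_odd {R : Type*} [CommRing R] [Nontrivial R] {ζ : R} {k : ℕ}
    (h : IsPrimitiveRoot ζ k) (hk : Odd k) (hR : ringChar R ≠ 2) :
    IsPrimitiveRoot (-ζ) (2 * k) := by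
  convert IsPrimitiveRoot.orderOf (-ζ)
  rw [neg_eq_neg_one_mul, (Commute.all _ _).orderOf_mul_eq_mul_orderOf_of_coprime, orderOf_neg_one,
    if_neg hR, ← h.eq_orderOf]
  rw [orderOf_neg_one, if_neg hR, ← h.eq_orderOf]
  exact Nat.coprime_two_left.mpr hk

section Generators

variable {ε : ℂ}

lemma star_eq_pow_four (hε : IsPrimitiveRoot ε 5) : star ε = ε ^ 4 := by
  have hnorm : ‖ε‖ = 1 := Complex.norm_eq_one_of_pow_eq_one hε.pow_eq_one (by norm_num)
  rw [Complex.star_def, ← Complex.inv_eq_conj hnorm]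
  exact inv_eq_of_mul_eq_one_right (by rw [← pow_succ']; exact hε.pow_eq_one)

lemma golden_of_isPrimitiveRoot (hε : IsPrimitiveRoot ε 5) :
    (ε + ε ^ 4) ^ 2 + (ε + ε ^ 4) = 1 := by
  have hsum := hε.geom_sum_eq_zero (by norm_num)
  simp only [Finset.sum_range_succ, Finset.sum_range_zero] at hsum
  linear_combination hsum + (2 + ε ^ 3) * hε.pow_eq_one

lemma inv_sq_mul_sub_two (hε : IsPrimitiveRoot ε 5) :
    ((ε ^ 2 - ε ^ 3)⁻¹) ^ 2 * (ε + ε ^ 4 - 2) = 1 := by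
  have hd : ε ^ 2 - ε ^ 3 ≠ 0 :=
    sub_ne_zero.mpr fun h => by simpa using hε.pow_inj (by norm_num) (by norm_num) h
  rw [show ε + ε ^ 4 - 2 = (ε ^ 2 - ε ^ 3) ^ 2 by linear_combination (2 - ε) * hε.pow_eq_one,
    ← mul_pow, inv_mul_cancel₀ hd, one_pow]

lemma S_eq_diagGL (hε : IsPrimitiveRoot ε 5) {S : GL (Fin 2) ℂ}
    (hS : (S : Matrix (Fin 2) (Fin 2) ℂ) = !![ε ^ 3, 0; 0, ε ^ 2]) {η : ℂˣ}
    (hη : (η : ℂ) = ε ^ 3) : S = diagGL η := by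
  have hη' : ((η⁻¹ : ℂˣ) : ℂ) = ε ^ 2 := by
    rw [Units.val_inv_eq_inv_val, hη]
    exact inv_eq_of_mul_eq_one_right (by rw [← pow_add]; exact hε.pow_eq_one)
  ext : 1
  rw [hS, coe_diagGL, hη, hη']

lemma S_mem_invariantSubgroup_icosaForm (hε : IsPrimitiveRoot ε 5) {S : GL (Fin 2) ℂ}
    (hS : (S : Matrix (Fin 2) (Fin 2) ℂ) = !![ε ^ 3, 0; 0, ε ^ 2]) :
    S ∈ invariantSubgroup icosaForm := by
  obtain ⟨η, hη⟩ : ∃ η : ℂˣ, (η : ℂ) = ε ^ 3 := (hε.isUnit (by norm_num)).pow 3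
  rw [S_eq_diagGL hε hS hη, diagGL_mem_invariantSubgroup_icosaForm_iff, Units.ext_iff,
    Units.val_pow_eq_pow_val, hη, ← pow_mul, Units.val_one]
  exact (hε.pow_eq_one_iff_dvd 30).mpr (by norm_num)

lemma S_mem_SU2 (hε : IsPrimitiveRoot ε 5) {S : GL (Fin 2) ℂ}
    (hS : (S : Matrix (Fin 2) (Fin 2) ℂ) = !![ε ^ 3, 0; 0, ε ^ 2]) : S ∈ SU2 := by
  have hstar : star (ε ^ 3) = ε ^ 2 := by
    rw [star_pow, star_eq_pow_four hε]
    linear_combination ε ^ 2 * (ε ^ 5 + 1) * hε.pow_eq_one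
  refine mem_SU2_of_coe_eq (a := ε ^ 3) (b := 0) (by simp [hS, hstar]) ?_
  rw [hstar]
  linear_combination hε.pow_eq_one

lemma T_mem_SU2 (hε : IsPrimitiveRoot ε 5) {T : GL (Fin 2) ℂ}
    (hT : (T : Matrix (Fin 2) (Fin 2) ℂ) =
      (ε ^ 2 - ε ^ 3)⁻¹ • !![ε + ε ^ 4, 1; 1, -(ε + ε ^ 4)]) : T ∈ SU2 := by
  set c := (ε ^ 2 - ε ^ 3)⁻¹
  set t := ε + ε ^ 4
  have h5 := hε.pow_eq_one
  have hstar_t : star t = t := by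
    simp only [t, star_add, star_pow, star_eq_pow_four hε]
    linear_combination (ε ^ 11 + ε ^ 6 + ε) * h5
  have hstar_c : star c = -c := by
    simp only [c, star_inv₀, star_sub, star_pow, star_eq_pow_four hε, ← inv_neg]
    congr 1
    linear_combination (ε ^ 3 - ε ^ 7 - ε ^ 2) * h5
  refine mem_SU2_of_coe_eq (a := c * t) (b := c) ?_ ?_
  · rw [hT, star_mul', hstar_c, hstar_t]
    ext i j
    fin_cases i <;> fin_cases j <;> simp
  · rw [star_mul', hstar_c, hstar_t]
    linear_combination -c ^ 2 * golden_of_isPrimitiveRoot hε + inv_sq_mul_sub_two hε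

lemma T_mem_invariantSubgroup_icosaForm (hε : IsPrimitiveRoot ε 5) {T : GL (Fin 2) ℂ}
    (hT : (T : Matrix (Fin 2) (Fin 2) ℂ) =
      (ε ^ 2 - ε ^ 3)⁻¹ • !![ε + ε ^ 4, 1; 1, -(ε + ε ^ 4)]) :
    T ∈ invariantSubgroup icosaForm := by
  set c := (ε ^ 2 - ε ^ 3)⁻¹
  set t := ε + ε ^ 4
  intro v
  have hTv : (T : Matrix (Fin 2) (Fin 2) ℂ) *ᵥ v = c • ![t * v 0 + v 1, v 0 - t * v 1] := by
    rw [hT, smul_mulVec, mulVec_fin_two]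
    simp [sub_eq_add_neg]
  rw [hTv, icosaForm_smul, icosaForm_golden (golden_of_isPrimitiveRoot hε), ← mul_assoc,
    show c ^ 12 * (t - 2) ^ 6 = (c ^ 2 * (t - 2)) ^ 6 by ring, inv_sq_mul_sub_two hε, one_pow,
    one_mul]

end Generators

lemma U_mem_SU2 {U : GL (Fin 2) ℂ} (hU : (U : Matrix (Fin 2) (Fin 2) ℂ) = !![0, 1; -1, 0]) :
    U ∈ SU2 :=
  mem_SU2_of_coe_eq (a := 0) (b := 1) (by simp [hU]) (by simp)

lemma U_mem_invariantSubgroup_icosaForm {U : GL (Fin 2) ℂ}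
    (hU : (U : Matrix (Fin 2) (Fin 2) ℂ) = !![0, 1; -1, 0]) :
    U ∈ invariantSubgroup icosaForm := by
  intro v
  rw [hU, mulVec_fin_two]
  simp only [icosaForm, of_apply, cons_val', cons_val_zero, cons_val_one, cons_val_fin_one,
    empty_val']
  ring

lemma sq_eq_diagGL_neg_one {U : GL (Fin 2) ℂ}
    (hU : (U : Matrix (Fin 2) (Fin 2) ℂ) = !![0, 1; -1, 0]) : U ^ 2 = diagGL (-1) := by
  ext i j
  rw [Units.val_pow_eq_pow_val, hU]
  fin_cases i <;> fin_cases j <;> simp [sq]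

section Stabilizer

variable {H : Subgroup (GL (Fin 2) ℂ)}

lemma setOf_mem_and_lAct_x₀_eq (hSU : H ≤ SU2) (hF : H ≤ invariantSubgroup icosaForm)
    (hroots : (rootsOfUnity 10 ℂ).map diagGL ≤ H) :
    {g | g ∈ H ∧ lAct g x₀ = x₀} = ((rootsOfUnity 10 ℂ).map diagGL : Set (GL (Fin 2) ℂ)) := by
  ext g
  simp only [Set.mem_ofPred_eq, SetLike.mem_coe, Subgroup.mem_map, mem_rootsOfUnity]
  constructor
  · rintro ⟨hg, hfix⟩
    obtain ⟨u, rfl⟩ := exists_eq_diagGL_of_mem_SU2 (hSU hg) ((lAct_x₀_eq_iff _).mp hfix)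
    exact ⟨u, (diagGL_mem_invariantSubgroup_icosaForm_iff u).mp (hF hg), rfl⟩
  · rintro ⟨u, hu, rfl⟩
    exact ⟨hroots ⟨u, (mem_rootsOfUnity _ _).mpr hu, rfl⟩, (lAct_x₀_eq_iff _).mpr (by simp)⟩

lemma card_stabilizer_x₀ (hSU : H ≤ SU2) (hF : H ≤ invariantSubgroup icosaForm)
    (hroots : (rootsOfUnity 10 ℂ).map diagGL ≤ H) :
    Nat.card {g // g ∈ H ∧ lAct g x₀ = x₀} = 10 := by
  change Nat.card ({g | g ∈ H ∧ lAct g x₀ = x₀} : Set (GL (Fin 2) ℂ)) = 10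
  rw [setOf_mem_and_lAct_x₀_eq hSU hF hroots]
  exact (Subgroup.card_map_of_injective diagGL_injective).trans (Complex.card_rootsOfUnity 10)

end Stabilizer

theorem stmt13 (ε : ℂ) (hε : IsPrimitiveRoot ε 5)
    (S T U : GL (Fin 2) ℂ)
    (hS : (S : Matrix (Fin 2) (Fin 2) ℂ) = !![ε ^ 3, 0; 0, ε ^ 2])
    (hT : (T : Matrix (Fin 2) (Fin 2) ℂ) =
      (ε ^ 2 - ε ^ 3)⁻¹ • !![ε + ε ^ 4, 1; 1, -(ε + ε ^ 4)])
    (hU : (U : Matrix (Fin 2) (Fin 2) ℂ) = !![0, 1; -1, 0])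
    (Gicosa : Subgroup (GL (Fin 2) ℂ)) (hG : Gicosa = Subgroup.closure {S, T, U}) :
    Nat.card {g : GL (Fin 2) ℂ // g ∈ Gicosa ∧ lAct g x₀ = x₀} = 10 := by
  have hgens {K : Subgroup (GL (Fin 2) ℂ)} (hSK : S ∈ K) (hTK : T ∈ K) (hUK : U ∈ K) :
      Gicosa ≤ K := by
    rw [hG, Subgroup.closure_le]
    rintro g (rfl | rfl | rfl) <;> assumption
  obtain ⟨η, hη⟩ : ∃ η : ℂˣ, (η : ℂ) = ε ^ 3 := (hε.isUnit (by norm_num)).pow 3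
  have hζ : IsPrimitiveRoot (-η) 10 := IsPrimitiveRoot.coe_units_iff.mp <| by
    simpa [hη] using (hε.pow_of_coprime 3 (by norm_num)).neg_of_odd (by decide) (by simp)
  refine card_stabilizer_x₀ (hgens (S_mem_SU2 hε hS) (T_mem_SU2 hε hT) (U_mem_SU2 hU))
    (hgens (S_mem_invariantSubgroup_icosaForm hε hS) (T_mem_invariantSubgroup_icosaForm hε hT)
      (U_mem_invariantSubgroup_icosaForm hU)) ?_
  rw [← hζ.zpowers_eq, MonoidHom.map_zpowers, Subgroup.zpowers_le, neg_eq_neg_one_mul, map_mul,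
    ← sq_eq_diagGL_neg_one hU, ← S_eq_diagGL hε hS hη, hG]
  exact mul_mem (pow_mem (Subgroup.subset_closure (by simp)) 2) (Subgroup.subset_closure (by simp))
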